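/- Let B be a symmetric n×n real matrix and let x, y ∈ Δ satisfy (y − x)ᵀBx > 0. Define δ = 1 if (y − x)ᵀB(y − x) ≥ 0, and δ = min{ (x − y)ᵀBx / ((y − x)ᵀB(y − x)), 1 } otherwise. Then δ ∈ (0, 1], the point z = x + δ(y − x) lies in Δ, and zᵀBz > xᵀBx. -/

import Mathlib

/-!
Along the segment `t ↦ x + t (y - x)` the quadratic form is the parabola
`xᵀBx + 2ta + t²b` with `a = (y - x)ᵀBx > 0` and `b = (y - x)ᵀB(y - x)`.
It exceeds `xᵀBx` exactly when `t (2a + tb) > 0`; the step size is chosen in `(0, 1]`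
with `tb ≥ -a`, so `2a + tb ≥ a > 0`, and `t ≤ 1` keeps the point in the convex set `Δ`.
-/

open Matrix Finset

theorem Matrix.IsSymm.dotProduct_mulVec_comm {m R : Type*} [Fintype m] [CommSemiring R]
    {B : Matrix m m R} (hB : B.IsSymm) (u v : m → R) : u ⬝ᵥ (B *ᵥ v) = v ⬝ᵥ (B *ᵥ u) := by
  simpa only [hB.eq] using dotProduct_transpose_mulVec B u v

theorem Matrix.IsSymm.dotProduct_mulVec_add_smul {m R : Type*} [Fintype m] [CommRing R]
    {B : Matrix m m R} (hB : B.IsSymm) (x d : m → R) (t : R) :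
    (x + t • d) ⬝ᵥ (B *ᵥ (x + t • d)) =
      x ⬝ᵥ (B *ᵥ x) + 2 * t * (d ⬝ᵥ (B *ᵥ x)) + t ^ 2 * (d ⬝ᵥ (B *ᵥ d)) := by
  simp only [mulVec_add, mulVec_smul, dotProduct_add, add_dotProduct, smul_dotProduct,
    dotProduct_smul, smul_eq_mul, hB.dotProduct_mulVec_comm x d]
  ring

/-- The step size as a function of `a = (y - x)ᵀBx` and `b = (y - x)ᵀB(y - x)`. -/
noncomputable def stepSize (a b : ℝ) : ℝ :=
  if 0 ≤ b then 1 else min (-a / b) 1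

theorem stepSize_mem_Ioc {a : ℝ} (ha : 0 < a) (b : ℝ) : stepSize a b ∈ Set.Ioc 0 1 := by
  unfold stepSize
  split_ifs with hb
  · exact ⟨one_pos, le_rfl⟩
  · exact ⟨lt_min (div_pos_of_neg_of_neg (neg_neg_of_pos ha) (not_le.mp hb)) one_pos,
      min_le_right _ _⟩

theorem neg_le_stepSize_mul {a : ℝ} (ha : 0 ≤ a) (b : ℝ) : -a ≤ stepSize a b * b := by
  unfold stepSize
  split_ifs with hb
  · linarith
  · have hb : b < 0 := not_le.mp hb
    calc -a = -a / b * b := (div_mul_cancel₀ _ hb.ne).symm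
      _ ≤ min (-a / b) 1 * b := mul_le_mul_of_nonpos_right (min_le_left _ _) hb.le

theorem two_mul_mul_add_sq_mul_pos {a b t : ℝ} (ha : 0 < a) (ht : 0 < t) (htb : -a ≤ t * b) :
    0 < 2 * t * a + t ^ 2 * b := by
  have : 0 < t * (a + (a + t * b)) := mul_pos ht (by linarith)
  linarith

/-- step-size rule of the infection–immunization dynamics.
If `B` is symmetric, `x, y ∈ Δ` and `(y − x)ᵀBx > 0`, with
`δ = 1` when `(y − x)ᵀB(y − x) ≥ 0` and
`δ = min((x − y)ᵀBx / ((y − x)ᵀB(y − x)), 1)` otherwise,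
then `δ ∈ (0,1]`, the point `z = x + δ(y − x)` lies in `Δ`, and `zᵀBz > xᵀBx`. -/
theorem infection_immunization_step
    (n : ℕ) (B : Matrix (Fin n) (Fin n) ℝ) (hB : B.IsSymm)
    (x y : Fin n → ℝ)
    (hx : x ∈ stdSimplex ℝ (Fin n)) (hy : y ∈ stdSimplex ℝ (Fin n))
    (hinf : 0 < (y - x) ⬝ᵥ (B *ᵥ x))
    (δ : ℝ)
    (hδ : δ = if 0 ≤ (y - x) ⬝ᵥ (B *ᵥ (y - x)) then (1 : ℝ)
          else min (((x - y) ⬝ᵥ (B *ᵥ x)) / ((y - x) ⬝ᵥ (B *ᵥ (y - x)))) 1) :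
    0 < δ ∧ δ ≤ 1 ∧ (x + δ • (y - x)) ∈ stdSimplex ℝ (Fin n) ∧
      x ⬝ᵥ (B *ᵥ x) < (x + δ • (y - x)) ⬝ᵥ (B *ᵥ (x + δ • (y - x))) := by
  set a := (y - x) ⬝ᵥ (B *ᵥ x)
  set b := (y - x) ⬝ᵥ (B *ᵥ (y - x))
  have hδ_eq : δ = stepSize a b := by
    rw [hδ, stepSize, ← neg_sub y x, neg_dotProduct]
  obtain ⟨hδ_pos, hδ_le⟩ : δ ∈ Set.Ioc 0 1 := hδ_eq ▸ stepSize_mem_Ioc hinf b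
  have hgain : 0 < 2 * δ * a + δ ^ 2 * b :=
    two_mul_mul_add_sq_mul_pos hinf hδ_pos (hδ_eq ▸ neg_le_stepSize_mul hinf.le b)
  refine ⟨hδ_pos, hδ_le,
    (convex_stdSimplex ℝ (Fin n)).add_smul_sub_mem hx hy ⟨hδ_pos.le, hδ_le⟩, ?_⟩
  rw [hB.dotProduct_mulVec_add_smul]
  linarith
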